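/- If n ≥ 0 satisfies PD_n = PD_{n+1}, then PD = PD_n. -/

import Mathlib

noncomputable section
open Matrix
open scoped ComplexOrder

variable {d m r : ℕ}

/-- One step of process `i`: `T_i(ρ) = E_i(M₁ ρ M₁†) = ∑_j (E_{i,j} M₁) ρ (E_{i,j} M₁)†`. -/
def Tstep (E : Fin m → Fin r → Matrix (Fin d) (Fin d) ℂ)
    (M1 : Matrix (Fin d) (Fin d) ℂ) (i : Fin m)
    (ρ : Matrix (Fin d) (Fin d) ℂ) : Matrix (Fin d) (Fin d) ℂ :=
  ∑ j, (E i j * M1) * ρ * (E i j * M1)ᴴ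

/-- `T_f` for a word `f = s₁⋯s_n`: apply `T_{s₁}` first, then `T_{s₂}`, …, `T_{s_n}`. -/
def Tword (E : Fin m → Fin r → Matrix (Fin d) (Fin d) ℂ)
    (M1 : Matrix (Fin d) (Fin d) ℂ) (f : List (Fin m))
    (ρ : Matrix (Fin d) (Fin d) ℂ) : Matrix (Fin d) (Fin d) ℂ :=
  f.foldl (fun σ k => Tstep E M1 k σ) ρ

/-- The support of a matrix: its column space, as a subspace of `ℂ^d`. -/
def supp (A : Matrix (Fin d) (Fin d) ℂ) : Submodule ℂ (Fin d → ℂ) :=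
  LinearMap.range (Matrix.toLin' A)

/-- Length-`n` prefix of a schedule. -/
def prefixn (s : ℕ → Fin m) (n : ℕ) : List (Fin m) :=
  List.ofFn (fun i : Fin n => s i)

/-- Termination probability within a word `f`. -/
def tWord (E : Fin m → Fin r → Matrix (Fin d) (Fin d) ℂ)
    (M0 M1 : Matrix (Fin d) (Fin d) ℂ) (f : List (Fin m))
    (ρ : Matrix (Fin d) (Fin d) ℂ) : ℝ :=
  ∑ n ∈ Finset.range (f.length + 1),
    (M0 * Tword E M1 (f.take n) ρ * M0ᴴ).trace.re

/-- Termination probability along a schedule `s`. -/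
def tSched (E : Fin m → Fin r → Matrix (Fin d) (Fin d) ℂ)
    (M0 M1 : Matrix (Fin d) (Fin d) ℂ) (s : ℕ → Fin m)
    (ρ : Matrix (Fin d) (Fin d) ℂ) : ℝ :=
  ∑' n : ℕ, (M0 * Tword E M1 (prefixn s n) ρ * M0ᴴ).trace.re

/-- Termination probability `t(ρ)`: infimum over all schedules. -/
def tInf (E : Fin m → Fin r → Matrix (Fin d) (Fin d) ℂ)
    (M0 M1 : Matrix (Fin d) (Fin d) ℂ)
    (ρ : Matrix (Fin d) (Fin d) ℂ) : ℝ :=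
  ⨅ s : ℕ → Fin m, tSched E M0 M1 s ρ

/-- The reachable space `H_{R(ρ)}`. -/
def HR (E : Fin m → Fin r → Matrix (Fin d) (Fin d) ℂ)
    (M1 : Matrix (Fin d) (Fin d) ℂ)
    (ρ : Matrix (Fin d) (Fin d) ℂ) : Submodule ℂ (Fin d → ℂ) :=
  ⨆ f : List (Fin m), supp (Tword E M1 f ρ)

/-- The average super-operator `T = (1/m) ∑ T_i`. -/
def Tavg (E : Fin m → Fin r → Matrix (Fin d) (Fin d) ℂ)
    (M1 : Matrix (Fin d) (Fin d) ℂ)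
    (ρ : Matrix (Fin d) (Fin d) ℂ) : Matrix (Fin d) (Fin d) ℂ :=
  ((m : ℂ)⁻¹) • ∑ i : Fin m, Tstep E M1 i ρ

/-- `H_{R̄_n(ρ)} = ⋁_{k=0}^n supp(T^k(ρ))`. -/
def HRbar (E : Fin m → Fin r → Matrix (Fin d) (Fin d) ℂ)
    (M1 : Matrix (Fin d) (Fin d) ℂ)
    (ρ : Matrix (Fin d) (Fin d) ℂ) (n : ℕ) : Submodule ℂ (Fin d → ℂ) :=
  ⨆ k : Fin (n + 1), supp ((Tavg E M1)^[k] ρ)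

/-- Reachable termination probability `h(ρ)`. -/
def hProb (E : Fin m → Fin r → Matrix (Fin d) (Fin d) ℂ)
    (M0 M1 : Matrix (Fin d) (Fin d) ℂ)
    (ρ : Matrix (Fin d) (Fin d) ℂ) : ℝ :=
  sInf { x : ℝ | ∃ σ : Matrix (Fin d) (Fin d) ℂ,
    σ.PosSemidef ∧ σ.trace = 1 ∧ supp σ ≤ HR E M1 ρ ∧ x = tInf E M0 M1 σ }

/-- `PD_f`: pure states diverging within the word `f`. -/
def PDword (E : Fin m → Fin r → Matrix (Fin d) (Fin d) ℂ)
    (M0 M1 : Matrix (Fin d) (Fin d) ℂ) (f : List (Fin m)) : Set (Fin d → ℂ) :=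
  { x : Fin d → ℂ | tWord E M0 M1 f (Matrix.vecMulVec x (star x)) = 0 }

/-- `PD_n`: union of `PD_f` over words of length `n`. -/
def PDn (E : Fin m → Fin r → Matrix (Fin d) (Fin d) ℂ)
    (M0 M1 : Matrix (Fin d) (Fin d) ℂ) (n : ℕ) : Set (Fin d → ℂ) :=
  { x : Fin d → ℂ | ∃ f : List (Fin m), f.length = n ∧ x ∈ PDword E M0 M1 f }

/-- `PD`: the diverging pure states. -/
def PD (E : Fin m → Fin r → Matrix (Fin d) (Fin d) ℂ)
    (M0 M1 : Matrix (Fin d) (Fin d) ℂ) : Set (Fin d → ℂ) :=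
  { x : Fin d → ℂ | ∃ s : ℕ → Fin m, tSched E M0 M1 s (Matrix.vecMulVec x (star x)) = 0 }

/-!
Each `PD_f` is a subspace of `ℂ^d`: `t_f` is a positive real-linear functional, and the vectors
`x` with `t_f(x x†) = 0` form a subspace by the parallelogram identity. So `PD_n` is a finite
union of subspaces, and since a subspace covered by finitely many subspaces of a vector space over
an infinite field lies in one of them, `PD_n ⊆ PD_{n+1}` yields for every word `g` of length `n`
a word `h` of length `n + 1` with `PD_g ⊆ PD_h`. Writing a mixed state as `∑ vᵢ vᵢ†` transfers
this inclusion to mixed states. Now if `t_{a t}(ρ) = 0` with `|a t| = n + 1`, then `ρ` does not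
terminate now and `t_t(T_a ρ) = 0` with `|t| = n`, so `T_a ρ` is again killed by a word of length
`n + 1`; iterating builds a schedule along which `x x†` never terminates.
Conversely, the traces `tr(M₀ ρ_k M₀†)` along a schedule sum to at most `tr ρ`, so `t_s(x x†) = 0`
forces each of them, hence `t_{s(≤n)}(x x†)`, to vanish.
-/

section PureKer

variable {n : Type*}

lemma vecMulVec_add_add_vecMulVec_sub (a b : n → ℂ) :
    vecMulVec (a + b) (star (a + b)) + vecMulVec (a - b) (star (a - b))
      = (2 : ℝ) • vecMulVec a (star a) + (2 : ℝ) • vecMulVec b (star b) := by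
  ext i j
  simp only [Matrix.add_apply, Matrix.smul_apply, vecMulVec_apply, Pi.star_apply, Pi.add_apply,
    Pi.sub_apply, Complex.real_smul, star_add, star_sub]
  push_cast
  ring

lemma vecMulVec_smul_star_smul (c : ℂ) (x : n → ℂ) :
    vecMulVec (c • x) (star (c • x)) = Complex.normSq c • vecMulVec x (star x) := by
  ext i j
  simp only [Matrix.smul_apply, vecMulVec_apply, Pi.star_apply, Pi.smul_apply, smul_eq_mul,
    star_mul', RCLike.star_def, Complex.real_smul, Complex.normSq_eq_conj_mul_self]
  ring

variable [Fintype n]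

lemma Matrix.PosSemidef.re_trace_nonneg {ρ : Matrix n n ℂ} (hρ : ρ.PosSemidef) :
    0 ≤ ρ.trace.re :=
  (Complex.nonneg_iff.mp hρ.trace_nonneg).1

lemma re_trace_mul_mul_conjTranspose_nonneg (A : Matrix n n ℂ) {ρ : Matrix n n ℂ}
    (hρ : ρ.PosSemidef) : 0 ≤ (A * ρ * Aᴴ).trace.re :=
  (hρ.mul_mul_conjTranspose_same A).re_trace_nonneg

def pureKer (φ : Matrix n n ℂ →ₗ[ℝ] ℝ) (hφ : ∀ ρ : Matrix n n ℂ, ρ.PosSemidef → 0 ≤ φ ρ) :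
    Submodule ℂ (n → ℂ) where
  carrier := {x | φ (vecMulVec x (star x)) = 0}
  zero_mem' := by simp
  add_mem' := by
    intro a b (ha : φ _ = 0) (hb : φ _ = 0)
    have hsum := congrArg φ (vecMulVec_add_add_vecMulVec_sub a b)
    rw [map_add, map_add, map_smul, map_smul, ha, hb, smul_zero, add_zero] at hsum
    have h₁ := hφ _ (posSemidef_vecMulVec_self_star (a + b))
    have h₂ := hφ _ (posSemidef_vecMulVec_self_star (a - b))
    show φ _ = 0
    linarith
  smul_mem' := by
    intro c x (hx : φ _ = 0)
    show φ _ = 0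
    rw [vecMulVec_smul_star_smul, map_smul, hx, smul_zero]

lemma apply_eq_zero_of_pureKer_le {φ ψ : Matrix n n ℂ →ₗ[ℝ] ℝ}
    {hφ : ∀ ρ : Matrix n n ℂ, ρ.PosSemidef → 0 ≤ φ ρ}
    {hψ : ∀ ρ : Matrix n n ℂ, ρ.PosSemidef → 0 ≤ ψ ρ}
    (hle : pureKer φ hφ ≤ pureKer ψ hψ) {σ : Matrix n n ℂ} (hσ : σ.PosSemidef)
    (h₀ : φ σ = 0) : ψ σ = 0 := by
  obtain ⟨k, v, rfl⟩ := posSemidef_iff_eq_sum_vecMulVec.mp hσ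
  rw [map_sum, Finset.sum_eq_zero_iff_of_nonneg
    fun i _ ↦ hφ _ (posSemidef_vecMulVec_self_star _)] at h₀
  rw [map_sum]
  exact Finset.sum_eq_zero fun i hi ↦ hle (h₀ i hi)

end PureKer

lemma Submodule.exists_le_of_subset_iUnion {K V : Type*} [Field K] [Infinite K]
    [AddCommGroup V] [Module K V] {ι : Type*} [Finite ι] {U : Submodule K V}
    {W : ι → Submodule K V} (h : (U : Set V) ⊆ ⋃ i, (W i : Set V)) : ∃ i, U ≤ W i := by
  have hcover : ⋃ i, ((W i).comap U.subtype : Set U) = Set.univ :=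
    Set.eq_univ_of_forall fun v ↦ by simpa using h v.2
  obtain ⟨i, hi⟩ := Subspace.exists_eq_top_of_iUnion_eq_univ hcover
  exact ⟨i, fun x hx ↦ (Submodule.eq_top_iff'.mp hi ⟨x, hx⟩ : _)⟩

section Program

variable {E : Fin m → Fin r → Matrix (Fin d) (Fin d) ℂ} {M0 M1 : Matrix (Fin d) (Fin d) ℂ}

lemma Tstep_add (i : Fin m) (ρ σ : Matrix (Fin d) (Fin d) ℂ) :
    Tstep E M1 i (ρ + σ) = Tstep E M1 i ρ + Tstep E M1 i σ := by
  simp [Tstep, Matrix.mul_add, Matrix.add_mul, Finset.sum_add_distrib]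

lemma Tstep_smul (i : Fin m) (c : ℂ) (ρ : Matrix (Fin d) (Fin d) ℂ) :
    Tstep E M1 i (c • ρ) = c • Tstep E M1 i ρ := by
  simp [Tstep, Finset.smul_sum]

lemma Tstep_posSemidef (i : Fin m) {ρ : Matrix (Fin d) (Fin d) ℂ} (hρ : ρ.PosSemidef) :
    (Tstep E M1 i ρ).PosSemidef :=
  posSemidef_sum _ fun _ _ ↦ hρ.mul_mul_conjTranspose_same _

lemma Tword_cons (i : Fin m) (f : List (Fin m)) (ρ : Matrix (Fin d) (Fin d) ℂ) :
    Tword E M1 (i :: f) ρ = Tword E M1 f (Tstep E M1 i ρ) := rfl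

lemma Tword_append_singleton (f : List (Fin m)) (i : Fin m) (ρ : Matrix (Fin d) (Fin d) ℂ) :
    Tword E M1 (f ++ [i]) ρ = Tstep E M1 i (Tword E M1 f ρ) := by
  simp [Tword]

lemma Tword_add (f : List (Fin m)) (ρ σ : Matrix (Fin d) (Fin d) ℂ) :
    Tword E M1 f (ρ + σ) = Tword E M1 f ρ + Tword E M1 f σ := by
  induction f generalizing ρ σ with
  | nil => rfl
  | cons i f ih => simp only [Tword_cons, Tstep_add, ih]

lemma Tword_smul (f : List (Fin m)) (c : ℂ) (ρ : Matrix (Fin d) (Fin d) ℂ) :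
    Tword E M1 f (c • ρ) = c • Tword E M1 f ρ := by
  induction f generalizing ρ with
  | nil => rfl
  | cons i f ih => simp only [Tword_cons, Tstep_smul, ih]

lemma Tword_posSemidef (f : List (Fin m)) {ρ : Matrix (Fin d) (Fin d) ℂ}
    (hρ : ρ.PosSemidef) : (Tword E M1 f ρ).PosSemidef := by
  induction f generalizing ρ with
  | nil => exact hρ
  | cons i f ih => exact ih (Tstep_posSemidef i hρ)

lemma tWord_cons (i : Fin m) (f : List (Fin m)) (ρ : Matrix (Fin d) (Fin d) ℂ) :
    tWord E M0 M1 (i :: f) ρ = (M0 * ρ * M0ᴴ).trace.re + tWord E M0 M1 f (Tstep E M1 i ρ) := by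
  simp only [tWord, List.length_cons, Finset.sum_range_succ', List.take_succ_cons, Tword_cons,
    List.take_zero]
  rw [add_comm]
  rfl

lemma tWord_nonneg (f : List (Fin m)) {ρ : Matrix (Fin d) (Fin d) ℂ} (hρ : ρ.PosSemidef) :
    0 ≤ tWord E M0 M1 f ρ :=
  Finset.sum_nonneg fun _ _ ↦ re_trace_mul_mul_conjTranspose_nonneg M0 (Tword_posSemidef _ hρ)

lemma tWord_cons_eq_zero {i : Fin m} {f : List (Fin m)} {ρ : Matrix (Fin d) (Fin d) ℂ}
    (hρ : ρ.PosSemidef) (h₀ : tWord E M0 M1 (i :: f) ρ = 0) :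
    (M0 * ρ * M0ᴴ).trace.re = 0 ∧ tWord E M0 M1 f (Tstep E M1 i ρ) = 0 := by
  rw [tWord_cons] at h₀
  have : 0 ≤ (M0 * ρ * M0ᴴ).trace.re := re_trace_mul_mul_conjTranspose_nonneg M0 hρ
  have : 0 ≤ tWord E M0 M1 f (Tstep E M1 i ρ) := tWord_nonneg f (Tstep_posSemidef i hρ)
  constructor <;> linarith

variable (E M0 M1) in
def tWordₗ (f : List (Fin m)) : Matrix (Fin d) (Fin d) ℂ →ₗ[ℝ] ℝ where
  toFun := tWord E M0 M1 f
  map_add' ρ σ := by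
    simp only [tWord, Tword_add, Matrix.mul_add, Matrix.add_mul, trace_add, Complex.add_re,
      Finset.sum_add_distrib]
  map_smul' c ρ := by
    simp only [tWord, ← Complex.coe_smul, Tword_smul, Matrix.mul_smul, Matrix.smul_mul,
      trace_smul, smul_eq_mul, Complex.re_ofReal_mul, RingHom.id_apply, Finset.mul_sum]

variable (E M0 M1) in
def PDsubmodule (f : List (Fin m)) : Submodule ℂ (Fin d → ℂ) :=
  pureKer (tWordₗ E M0 M1 f) fun _ ↦ tWord_nonneg f

lemma prefixn_succ (s : ℕ → Fin m) (k : ℕ) : prefixn s (k + 1) = prefixn s k ++ [s k] := by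
  rw [prefixn, List.ofFn_succ_last]
  rfl

lemma take_prefixn (s : ℕ → Fin m) {k N : ℕ} (hk : k ≤ N) :
    (prefixn s N).take k = prefixn s k := by
  apply List.ext_getElem <;> simp [prefixn, hk]

lemma tWord_prefixn (s : ℕ → Fin m) (N : ℕ) (ρ : Matrix (Fin d) (Fin d) ℂ) :
    tWord E M0 M1 (prefixn s N) ρ
      = ∑ k ∈ Finset.range (N + 1), (M0 * Tword E M1 (prefixn s k) ρ * M0ᴴ).trace.re := by
  rw [tWord, show (prefixn s N).length = N by simp [prefixn]]
  exact Finset.sum_congr rfl fun k hk ↦ by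
    rw [take_prefixn s (Nat.lt_succ_iff.mp (Finset.mem_range.mp hk))]

lemma exists_PDsubmodule_le_of_PDn_subset {n L : ℕ}
    (hsub : PDn E M0 M1 n ⊆ PDn E M0 M1 L) {g : List (Fin m)} (hg : g.length = n) :
    ∃ h : List (Fin m), h.length = L ∧ PDsubmodule E M0 M1 g ≤ PDsubmodule E M0 M1 h := by
  have : Finite {h : List (Fin m) // h.length = L} := List.Vector.finite
  have hcover : (PDsubmodule E M0 M1 g : Set (Fin d → ℂ))
      ⊆ ⋃ h : {h : List (Fin m) // h.length = L}, (PDsubmodule E M0 M1 h : Set (Fin d → ℂ)) :=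
    fun x hx ↦ by
      obtain ⟨h, hlen, hxh⟩ := hsub ⟨g, hg, hx⟩
      exact Set.mem_iUnion.mpr ⟨⟨h, hlen⟩, hxh⟩
  obtain ⟨⟨h, hlen⟩, hle⟩ := Submodule.exists_le_of_subset_iUnion hcover
  exact ⟨h, hlen, hle⟩

lemma tWord_eq_zero_of_PDsubmodule_le {g h : List (Fin m)}
    (hle : PDsubmodule E M0 M1 g ≤ PDsubmodule E M0 M1 h) {σ : Matrix (Fin d) (Fin d) ℂ}
    (hσ : σ.PosSemidef) (h₀ : tWord E M0 M1 g σ = 0) : tWord E M0 M1 h σ = 0 :=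
  apply_eq_zero_of_pureKer_le hle hσ h₀

variable (E M0 M1) in
def PDnState (L : ℕ) : Set (Matrix (Fin d) (Fin d) ℂ) :=
  {ρ | ρ.PosSemidef ∧ ∃ f : List (Fin m), f.length = L ∧ tWord E M0 M1 f ρ = 0}

lemma vecMulVec_mem_PDnState {L : ℕ} {x : Fin d → ℂ} (hx : x ∈ PDn E M0 M1 L) :
    vecMulVec x (star x) ∈ PDnState E M0 M1 L :=
  ⟨posSemidef_vecMulVec_self_star x, hx⟩

lemma exists_Tstep_mem_PDnState {n : ℕ} (hsub : PDn E M0 M1 n ⊆ PDn E M0 M1 (n + 1))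
    {ρ : Matrix (Fin d) (Fin d) ℂ} (hρ : ρ ∈ PDnState E M0 M1 (n + 1)) :
    (M0 * ρ * M0ᴴ).trace.re = 0 ∧ ∃ i, Tstep E M1 i ρ ∈ PDnState E M0 M1 (n + 1) := by
  obtain ⟨hpsd, _ | ⟨i, t⟩, hlen, h₀⟩ := hρ
  · simp at hlen
  obtain ⟨hmeasure, ht⟩ := tWord_cons_eq_zero hpsd h₀
  obtain ⟨h, hhlen, hle⟩ :=
    exists_PDsubmodule_le_of_PDn_subset hsub (by simpa using hlen : t.length = n)
  have hTpsd := Tstep_posSemidef (E := E) (M1 := M1) i hpsd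
  exact ⟨hmeasure, i, hTpsd, h, hhlen, tWord_eq_zero_of_PDsubmodule_le hle hTpsd ht⟩

lemma exists_schedule_forall_Tword_mem {S : Set (Matrix (Fin d) (Fin d) ℂ)}
    (hS : ∀ ρ ∈ S, ∃ i, Tstep E M1 i ρ ∈ S) {ρ : Matrix (Fin d) (Fin d) ℂ} (hρ : ρ ∈ S) :
    ∃ s : ℕ → Fin m, ∀ k, Tword E M1 (prefixn s k) ρ ∈ S := by
  choose next hnext using hS
  let state : ℕ → S := fun k ↦ Nat.rec ⟨ρ, hρ⟩ (fun _ σ ↦ ⟨_, hnext σ σ.2⟩) k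
  refine ⟨fun k ↦ next (state k).1 (state k).2, fun k ↦ ?_⟩
  suffices Tword E M1 (prefixn _ k) ρ = (state k).1 by exact this ▸ (state k).2
  induction k with
  | zero => rfl
  | succ k ih => rw [prefixn_succ, Tword_append_singleton, ih]

lemma PDn_subset_PD {n : ℕ} (hsub : PDn E M0 M1 n ⊆ PDn E M0 M1 (n + 1)) :
    PDn E M0 M1 n ⊆ PD E M0 M1 := by
  intro x hx
  obtain ⟨s, hs⟩ := exists_schedule_forall_Tword_mem
    (fun _ hρ ↦ (exists_Tstep_mem_PDnState hsub hρ).2) (vecMulVec_mem_PDnState (hsub hx))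
  refine ⟨s, ?_⟩
  simp [tSched, fun k ↦ (exists_Tstep_mem_PDnState hsub (hs k)).1]

lemma trace_Tstep (hE : ∀ i, ∑ j, (E i j)ᴴ * E i j = 1) (i : Fin m)
    (ρ : Matrix (Fin d) (Fin d) ℂ) : (Tstep E M1 i ρ).trace = (M1ᴴ * M1 * ρ).trace := by
  have hkraus : ∑ j, (E i j * M1)ᴴ * (E i j * M1) = M1ᴴ * M1 := by
    simp only [conjTranspose_mul, Matrix.mul_assoc, ← Finset.mul_sum]
    simp only [← Matrix.mul_assoc, ← Finset.sum_mul, hE i, Matrix.mul_one]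
  rw [Tstep, trace_sum, ← hkraus, Finset.sum_mul, trace_sum]
  exact Finset.sum_congr rfl fun j _ ↦ trace_mul_cycle _ _ _

lemma trace_measure_add_trace_Tstep (hE : ∀ i, ∑ j, (E i j)ᴴ * E i j = 1)
    (hM : M0ᴴ * M0 + M1ᴴ * M1 = 1) (i : Fin m) (ρ : Matrix (Fin d) (Fin d) ℂ) :
    (M0 * ρ * M0ᴴ).trace + (Tstep E M1 i ρ).trace = ρ.trace := by
  rw [trace_Tstep hE, trace_mul_cycle M0, ← trace_add, ← Matrix.add_mul, hM, Matrix.one_mul]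

lemma sum_trace_measure_add_trace_Tword (hE : ∀ i, ∑ j, (E i j)ᴴ * E i j = 1)
    (hM : M0ᴴ * M0 + M1ᴴ * M1 = 1) (s : ℕ → Fin m) (ρ : Matrix (Fin d) (Fin d) ℂ) (N : ℕ) :
    ∑ k ∈ Finset.range N, (M0 * Tword E M1 (prefixn s k) ρ * M0ᴴ).trace
      + (Tword E M1 (prefixn s N) ρ).trace = ρ.trace := by
  induction N with
  | zero => simp [prefixn, Tword]
  | succ N ih =>
    rw [Finset.sum_range_succ, prefixn_succ, Tword_append_singleton, add_assoc,
      trace_measure_add_trace_Tstep hE hM, ih]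

lemma summable_trace_measure_Tword (hE : ∀ i, ∑ j, (E i j)ᴴ * E i j = 1)
    (hM : M0ᴴ * M0 + M1ᴴ * M1 = 1) (s : ℕ → Fin m) {ρ : Matrix (Fin d) (Fin d) ℂ}
    (hρ : ρ.PosSemidef) :
    Summable fun k ↦ (M0 * Tword E M1 (prefixn s k) ρ * M0ᴴ).trace.re := by
  refine summable_of_sum_range_le (c := ρ.trace.re)
    (fun k ↦ re_trace_mul_mul_conjTranspose_nonneg M0 (Tword_posSemidef _ hρ)) fun N ↦ ?_
  have h := congrArg Complex.re (sum_trace_measure_add_trace_Tword hE hM s ρ N)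
  rw [Complex.add_re, Complex.re_sum] at h
  linarith [(Tword_posSemidef (E := E) (M1 := M1) (prefixn s N) hρ).re_trace_nonneg]

lemma PD_subset_PDn (hE : ∀ i, ∑ j, (E i j)ᴴ * E i j = 1) (hM : M0ᴴ * M0 + M1ᴴ * M1 = 1)
    (n : ℕ) : PD E M0 M1 ⊆ PDn E M0 M1 n := by
  rintro x ⟨s, hs⟩
  have hx := posSemidef_vecMulVec_self_star x
  -- Summability is essential here: a divergent `tSched` would be `0` as well.
  have hsum := (summable_trace_measure_Tword hE hM s hx).hasSum
  rw [← tSched, hs] at hsum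
  have hterms := (hasSum_zero_iff_of_nonneg fun k ↦
    re_trace_mul_mul_conjTranspose_nonneg M0 (Tword_posSemidef _ hx)).mp hsum
  refine ⟨prefixn s n, by simp [prefixn], ?_⟩
  show tWord E M0 M1 _ _ = 0
  simp [tWord_prefixn, funext_iff.mp hterms]

end Program

theorem PD_eq_PDn_of_stable_general (d m r : ℕ)
    (E : Fin m → Fin r → Matrix (Fin d) (Fin d) ℂ)
    (hE : ∀ i, ∑ j, (E i j)ᴴ * E i j = 1)
    (M0 M1 : Matrix (Fin d) (Fin d) ℂ)
    (hM : M0ᴴ * M0 + M1ᴴ * M1 = 1)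
    (n : ℕ) (hstab : PDn E M0 M1 n = PDn E M0 M1 (n + 1)) :
    PD E M0 M1 = PDn E M0 M1 n :=
  (PD_subset_PDn hE hM n).antisymm (PDn_subset_PD hstab.subset)

/-- if `PD_n = PD_{n+1}` then `PD = PD_n`. -/
theorem PD_eq_PDn_of_stable (d m r : ℕ) (hd : 0 < d) (hm : 0 < m)
    (E : Fin m → Fin r → Matrix (Fin d) (Fin d) ℂ)
    (hE : ∀ i, ∑ j, (E i j)ᴴ * E i j = 1)
    (M0 M1 : Matrix (Fin d) (Fin d) ℂ)
    (hM : M0ᴴ * M0 + M1ᴴ * M1 = 1)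
    (n : ℕ) (hstab : PDn E M0 M1 n = PDn E M0 M1 (n + 1)) :
    PD E M0 M1 = PDn E M0 M1 n :=
  PD_eq_PDn_of_stable_general d m r E hE M0 M1 hM n hstab
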